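/- The family {v + Δ_{d,j} : 1 ≤ j ≤ d, v ∈ Z_{≥0}^{d+1}, Σ v_t = ir - j, v_t ≤ r-1 for all t} is a polyhedral subdivision of rΔ_{d,i}: the union of its members is rΔ_{d,i}, and any two members intersect in a common face. -/
import Mathlib


open scoped Classical BigOperators

noncomputable section

/-- Descent set of a permutation of `Fin d`. -/
def descents (d : ℕ) (π : Equiv.Perm (Fin d)) : Finset (Fin d) :=
  Finset.univ.filter (fun t => ∃ h : (t : ℕ) + 1 < d, π ⟨(t : ℕ) + 1, h⟩ < π t)

/-- Eulerian number `A(d,j)`: permutations of `{1,…,d}` with `j-1` descents. -/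
def A (d j : ℕ) : ℕ :=
  (Finset.univ.filter (fun π : Equiv.Perm (Fin d) => (descents d π).card = j - 1)).card

/-- `C s n m`: number of weak compositions of `m` into `n` parts, each part at most `s`. -/
def C (s n : ℕ) (m : ℤ) : ℕ :=
  Fintype.card {v : Fin n → Fin (s + 1) // ∑ t, ((v t : ℕ) : ℤ) = m}

/-- The hypersimplex `Δ_{d,j} ⊆ ℝ^{d+1}`. -/
def Δ (d j : ℕ) : Set (Fin (d + 1) → ℝ) :=
  {x | ∑ t, x t = j ∧ ∀ t, 0 ≤ x t ∧ x t ≤ 1}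

/-- The lattice translate `v + Δ_{d,j}`. -/
def latTranslate (d : ℕ) (v : Fin (d + 1) → ℤ) (j : ℕ) : Set (Fin (d + 1) → ℝ) :=
  {x | (fun t => x t - (v t : ℝ)) ∈ Δ d j}

/-- The 0/1 indicator vector of a subset `T ⊆ [d+1]`. -/
def ind (d : ℕ) (T : Finset (Fin (d + 1))) : Fin (d + 1) → ℝ :=
  fun t => if t ∈ T then 1 else 0

/-- `F` is a face of `P`: empty, or the set of maximizers of a linear functional over `P`. -/
def IsFace {n : ℕ} (P F : Set (Fin n → ℝ)) : Prop :=
  F = ∅ ∨ ∃ f : (Fin n → ℝ) →ₗ[ℝ] ℝ, F = {x | x ∈ P ∧ ∀ y ∈ P, f y ≤ f x}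

/-- The `r`-dilate `rΔ_{d,i}`. -/
def rdil (d r i : ℕ) : Set (Fin (d + 1) → ℝ) :=
  {x | ∑ t, x t = (i : ℝ) * r ∧ ∀ t, 0 ≤ x t ∧ x t ≤ r}

/-- The set `𝒞(s, n, m)` of lattice weak compositions of `m` into `n` parts each `≤ s`. -/
def Comp (s n : ℕ) (m : ℤ) : Set (Fin n → ℤ) :=
  {v | (∀ t, 0 ≤ v t ∧ v t ≤ s) ∧ ∑ t, v t = m}
lemma mem_lat {d : ℕ} {u : Fin (d+1) → ℤ} {j : ℕ} {x : Fin (d+1) → ℝ} :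
    x ∈ latTranslate d u j ↔
      ((∑ t, x t) = (∑ t, (u t : ℝ)) + j ∧ ∀ t, (u t : ℝ) ≤ x t ∧ x t ≤ u t + 1) := by
  unfold latTranslate Δ
  simp only [Set.mem_setOf_eq, Finset.sum_sub_distrib]
  constructor
  · rintro ⟨h1, h2⟩
    exact ⟨by linarith, fun t => ⟨by linarith [(h2 t).1], by linarith [(h2 t).2]⟩⟩
  · rintro ⟨h1, h2⟩
    exact ⟨by linarith, fun t => ⟨by linarith [(h2 t).1], by linarith [(h2 t).2]⟩⟩

def lf {n : ℕ} (c : Fin n → ℝ) : (Fin n → ℝ) →ₗ[ℝ] ℝ where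
  toFun x := ∑ t, c t * x t
  map_add' x y := by simp [mul_add, Finset.sum_add_distrib]
  map_smul' a x := by
    simp only [smul_eq_mul, RingHom.id_apply, Finset.mul_sum, Pi.smul_apply]
    exact Finset.sum_congr rfl fun t _ => by ring

lemma lf_apply {n : ℕ} (c x : Fin n → ℝ) : lf c x = ∑ t, c t * x t := rfl

lemma face_aux {d : ℕ} (j1 j2 : ℕ) (u v : Fin (d+1) → ℤ)
    (hsum : (∑ t, (u t : ℝ)) + j1 = (∑ t, (v t : ℝ)) + j2) :
    IsFace (latTranslate d u j1) (latTranslate d u j1 ∩ latTranslate d v j2) := by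
  rcases Set.eq_empty_or_nonempty (latTranslate d u j1 ∩ latTranslate d v j2) with he | hne
  · exact Or.inl he
  obtain ⟨x₀, hx₀u, hx₀v⟩ := hne
  right
  set c : Fin (d+1) → ℝ := fun t => if v t = u t + 1 then 1 else if u t = v t + 1 then -1 else 0
    with hc
  refine ⟨lf c, ?_⟩
  have key : ∀ z ∈ latTranslate d u j1 ∩ latTranslate d v j2,
      ∀ y ∈ latTranslate d u j1, ∀ t, c t * y t ≤ c t * z t := by
    rintro z ⟨hzu, hzv⟩ y hy t
    rw [mem_lat] at hzu hzv hy
    by_cases h1 : v t = u t + 1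
    · have h1' : (v t : ℝ) = (u t : ℝ) + 1 := by exact_mod_cast h1
      have : y t ≤ z t := by linarith [(hy.2 t).2, (hzv.2 t).1]
      simp only [hc, if_pos h1]
      linarith
    · by_cases h2 : u t = v t + 1
      · have h2' : (u t : ℝ) = (v t : ℝ) + 1 := by exact_mod_cast h2
        have : z t ≤ y t := by linarith [(hy.2 t).1, (hzv.2 t).2]
        simp only [hc, if_neg h1, if_pos h2]
        linarith
      · simp [hc, h1, h2]
  ext x
  simp only [Set.mem_inter_iff, Set.mem_setOf_eq]
  constructor
  · rintro ⟨hxu, hxv⟩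
    refine ⟨hxu, fun y hy => ?_⟩
    rw [lf_apply, lf_apply]
    exact Finset.sum_le_sum fun t _ => key x ⟨hxu, hxv⟩ y hy t
  · rintro ⟨hxu, hmax⟩
    refine ⟨hxu, ?_⟩
    have hle : lf c x ≤ lf c x₀ := by
      rw [lf_apply, lf_apply]
      exact Finset.sum_le_sum fun t _ => key x₀ ⟨hx₀u, hx₀v⟩ x hxu t
    have hge : lf c x₀ ≤ lf c x := hmax x₀ hx₀u
    have heqsum : ∑ t, c t * x t = ∑ t, c t * x₀ t := by
      have := le_antisymm hle hge
      rw [lf_apply, lf_apply] at this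
      exact this
    have heq : ∀ t, c t * x t = c t * x₀ t := by
      intro t
      have h := (Finset.sum_eq_sum_iff_of_le
        (fun t _ => key x₀ ⟨hx₀u, hx₀v⟩ x hxu t)).mp heqsum
      exact h t (Finset.mem_univ t)
    rw [mem_lat] at hxu hx₀u hx₀v ⊢
    refine ⟨by linarith [hxu.1], ?_⟩
    intro t
    by_cases h1 : v t = u t + 1
    · have h1' : (v t : ℝ) = (u t : ℝ) + 1 := by exact_mod_cast h1
      have hx0t : x₀ t = (u t : ℝ) + 1 := le_antisymm (hx₀u.2 t).2 (by linarith [(hx₀v.2 t).1])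
      have hxe : x t = x₀ t := by
        have := heq t
        simp only [hc, if_pos h1] at this
        linarith
      constructor <;> [skip; skip] <;> rw [hxe, hx0t] <;> linarith
    · by_cases h2 : u t = v t + 1
      · have h2' : (u t : ℝ) = (v t : ℝ) + 1 := by exact_mod_cast h2
        have hx0t : x₀ t = (u t : ℝ) := le_antisymm (by linarith [(hx₀v.2 t).2]) (hx₀u.2 t).1
        have hxe : x t = x₀ t := by
          have := heq t
          simp only [hc, if_neg h1, if_pos h2] at this
          linarith
        constructor <;> rw [hxe, hx0t] <;> linarith
      · have hb1 : v t ≤ u t + 1 := by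
          have : (v t : ℝ) ≤ (u t : ℝ) + 1 := le_trans (hx₀v.2 t).1 (hx₀u.2 t).2
          exact_mod_cast this
        have hb2 : u t ≤ v t + 1 := by
          have : (u t : ℝ) ≤ (v t : ℝ) + 1 := le_trans (hx₀u.2 t).1 (hx₀v.2 t).2
          exact_mod_cast this
        have huv : u t = v t := by omega
        have huv' : (u t : ℝ) = (v t : ℝ) := by exact_mod_cast huv
        exact ⟨by linarith [(hxu.2 t).1], by linarith [(hxu.2 t).2]⟩


lemma union_eq (d r i : ℕ) (hd : 1 ≤ d) (hr : 1 ≤ r) (hi1 : 1 ≤ i) (hid : i ≤ d) :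
    rdil d r i =
      ⋃ j ∈ Finset.Icc 1 d, ⋃ v ∈ Comp (r - 1) (d + 1) ((i : ℤ) * r - j),
        latTranslate d v j := by
  have hrcast : ((r - 1 : ℕ) : ℤ) = (r : ℤ) - 1 := by omega
  ext x
  simp only [Set.mem_iUnion, Finset.mem_Icc, exists_prop, rdil, Set.mem_setOf_eq]
  constructor
  · rintro ⟨hs, hb⟩
    set w : Fin (d+1) → ℤ := fun t => max (⌈x t⌉ - 1) 0 with hw
    have hw0 : ∀ t, 0 ≤ w t := fun t => le_max_right _ _
    have hwr : ∀ t, w t ≤ (r : ℤ) - 1 := by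
      intro t
      have h1 : ⌈x t⌉ ≤ (r : ℤ) := Int.ceil_le.mpr (by exact_mod_cast (hb t).2)
      simp only [hw]
      omega
    have hd0 : ∀ t, 0 ≤ x t - (w t : ℝ) := by
      intro t
      rcases le_or_gt (⌈x t⌉) 0 with h | h
      · have hwt : w t = 0 := by simp only [hw]; omega
        rw [hwt]; push_cast; linarith [(hb t).1]
      · have hwt : w t = ⌈x t⌉ - 1 := by simp only [hw]; omega
        rw [hwt]
        have := Int.ceil_lt_add_one (x t)
        push_cast; linarith
    have hd1 : ∀ t, x t - (w t : ℝ) ≤ 1 := by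
      intro t
      have hx1 : x t ≤ ⌈x t⌉ := Int.le_ceil _
      rcases le_or_gt (⌈x t⌉) 0 with h | h
      · have hwt : w t = 0 := by simp only [hw]; omega
        have h' : ((⌈x t⌉ : ℤ) : ℝ) ≤ 0 := by exact_mod_cast h
        rw [hwt]; push_cast; linarith
      · have hwt : w t = ⌈x t⌉ - 1 := by simp only [hw]; omega
        rw [hwt]; push_cast; linarith
    have hdpos : ∀ t, 0 < x t → 0 < x t - (w t : ℝ) := by
      intro t hxt
      have h : 0 < ⌈x t⌉ := Int.ceil_pos.mpr hxt
      have hwt : w t = ⌈x t⌉ - 1 := by simp only [hw]; omega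
      rw [hwt]
      have := Int.ceil_lt_add_one (x t)
      push_cast; linarith
    set S : ℤ := ∑ t, w t with hS
    have hcastS : ((S : ℤ) : ℝ) = ∑ t, (w t : ℝ) := by push_cast [hS]; rfl
    have hsum_diff : ∑ t, (x t - (w t : ℝ)) = (i : ℝ) * r - (S : ℝ) := by
      rw [Finset.sum_sub_distrib, hs, hcastS]
    have hpos : 0 < (i : ℝ) * r - (S : ℝ) := by
      have hex : ∃ t, 0 < x t := by
        by_contra hcon
        push_neg at hcon
        have h1 : ∑ t, x t ≤ 0 := Finset.sum_nonpos (fun t _ => hcon t)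
        have h2 : (1 : ℝ) ≤ i := by exact_mod_cast hi1
        have h3 : (1 : ℝ) ≤ r := by exact_mod_cast hr
        nlinarith
      obtain ⟨t0, ht0⟩ := hex
      have hsp : 0 < ∑ t, (x t - (w t : ℝ)) :=
        Finset.sum_pos' (fun t _ => hd0 t) ⟨t0, Finset.mem_univ _, hdpos t0 ht0⟩
      linarith [hsum_diff ▸ hsp]
    have hle : (i : ℝ) * r - (S : ℝ) ≤ (d : ℝ) + 1 := by
      have h1 : ∑ t, (x t - (w t : ℝ)) ≤ ∑ _t : Fin (d+1), (1 : ℝ) :=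
        Finset.sum_le_sum (fun t _ => hd1 t)
      simp only [Finset.sum_const, Finset.card_univ, Fintype.card_fin, nsmul_eq_mul,
        mul_one] at h1
      rw [hsum_diff] at h1
      push_cast at h1 ⊢
      linarith
    set J : ℤ := (i : ℤ) * r - S with hJ
    have hJr : ((J : ℤ) : ℝ) = (i : ℝ) * r - (S : ℝ) := by push_cast [hJ]; ring
    have hJ1 : 1 ≤ J := by
      have : (0 : ℝ) < (J : ℝ) := by rw [hJr]; exact hpos
      have : 0 < J := by exact_mod_cast this
      omega
    have hJd1 : J ≤ (d : ℤ) + 1 := by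
      have : (J : ℝ) ≤ (d : ℝ) + 1 := by rw [hJr]; exact hle
      exact_mod_cast this
    rcases lt_or_eq_of_le hJd1 with hJlt | hJeq
    · -- generic case J ≤ d
      have hJd : J ≤ (d : ℤ) := by omega
      refine ⟨J.toNat, ⟨by omega, by omega⟩, w, ⟨fun t => ⟨hw0 t, by rw [hrcast]; exact hwr t⟩,
        by rw [hS.symm] at *; omega⟩, ?_⟩
      rw [mem_lat]
      constructor
      · have : ((J.toNat : ℕ) : ℝ) = (J : ℝ) := by
          have : ((J.toNat : ℕ) : ℤ) = J := by omega
          exact_mod_cast this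
        rw [hs, ← hcastS, this, hJr]
        ring
      · exact fun t => ⟨by linarith [hd0 t], by linarith [hd1 t]⟩
    · -- J = d + 1 : all coordinates of x are positive integers
      have hall : ∀ t, x t - (w t : ℝ) = 1 := by
        by_contra hcon
        push_neg at hcon
        obtain ⟨t0, ht0⟩ := hcon
        have hlt : x t0 - (w t0 : ℝ) < 1 := lt_of_le_of_ne (hd1 t0) ht0
        have h1 : ∑ t, (x t - (w t : ℝ)) < ∑ _t : Fin (d+1), (1 : ℝ) :=
          Finset.sum_lt_sum (fun t _ => hd1 t) ⟨t0, Finset.mem_univ _, hlt⟩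
        simp only [Finset.sum_const, Finset.card_univ, Fintype.card_fin, nsmul_eq_mul,
          mul_one] at h1
        rw [hsum_diff] at h1
        have h2 : ((J : ℤ) : ℝ) < (d : ℝ) + 1 := by rw [hJr]; push_cast at h1 ⊢; linarith
        have h3 : J < (d : ℤ) + 1 := by exact_mod_cast h2
        omega
      have hex : ∃ t0, x t0 < r := by
        by_contra hcon
        push_neg at hcon
        have hxr : ∀ t, x t = r := fun t => le_antisymm (hb t).2 (hcon t)
        have h1 : ∑ t, x t = ((d : ℝ) + 1) * r := by
          simp only [hxr, Finset.sum_const, Finset.card_univ, Fintype.card_fin, nsmul_eq_mul]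
          push_cast; ring
        rw [hs] at h1
        have hiR : (i : ℝ) ≤ d := by exact_mod_cast hid
        have hr1 : (1 : ℝ) ≤ r := by exact_mod_cast hr
        nlinarith
      obtain ⟨t0, ht0⟩ := hex
      have hxw : x t0 = (w t0 : ℝ) + 1 := by linarith [hall t0]
      have hwt0 : w t0 + 1 ≤ (r : ℤ) - 1 := by
        have h1 : (w t0 : ℝ) + 1 < (r : ℝ) := by rw [← hxw]; exact ht0
        have h2 : w t0 + 1 < (r : ℤ) := by exact_mod_cast h1
        omega
      set v : Fin (d+1) → ℤ := Function.update w t0 (w t0 + 1) with hv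
      have hvt : ∀ t, v t = w t + (if t = t0 then 1 else 0) := by
        intro t
        by_cases h : t = t0
        · subst h; simp [hv]
        · simp [hv, Function.update_apply, h]
      have hvsum : ∑ t, v t = S + 1 := by
        simp only [hvt, Finset.sum_add_distrib, Finset.sum_ite_eq' Finset.univ t0,
          Finset.mem_univ, if_pos, hS.symm]
      refine ⟨d, ⟨hd, le_refl d⟩, v, ⟨?_, ?_⟩, ?_⟩
      · intro t
        rw [hvt t, hrcast]
        by_cases h : t = t0
        · rw [if_pos h, h]
          exact ⟨by have := hw0 t0; omega, hwt0⟩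
        · simp only [if_neg h, add_zero]
          exact ⟨hw0 t, hwr t⟩
      · rw [hvsum]; omega
      · rw [mem_lat]
        have hvcast : ∑ t, ((v t : ℤ) : ℝ) = (S : ℝ) + 1 := by
          exact_mod_cast congrArg (fun z : ℤ => (z : ℝ)) hvsum
        constructor
        · rw [hs, hvcast]
          have : ((J : ℤ) : ℝ) = (d : ℝ) + 1 := by exact_mod_cast hJeq
          rw [hJr] at this
          linarith
        · intro t
          rw [hvt t]
          by_cases h : t = t0
          · subst h
            simp only [if_pos rfl]
            push_cast
            rw [hxw]
            constructor <;> linarith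
          · simp only [if_neg h, add_zero]
            have := hall t
            constructor <;> linarith
  · rintro ⟨j, ⟨hj1, hjd⟩, v, ⟨hvb, hvs⟩, hx⟩
    rw [mem_lat] at hx
    have hsv : (∑ t, (v t : ℝ)) = (i : ℝ) * r - (j : ℝ) := by
      have := congrArg (fun z : ℤ => (z : ℝ)) hvs
      push_cast at this
      exact this
    constructor
    · rw [hx.1, hsv]; ring
    · intro t
      have h := hx.2 t
      have hb := hvb t
      have h1 : (0 : ℝ) ≤ (v t : ℝ) := by exact_mod_cast hb.1
      have h2 : (v t : ℝ) ≤ (r : ℝ) - 1 := by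
        have : (v t : ℤ) ≤ (r : ℤ) - 1 := by rw [← hrcast]; exact hb.2
        exact_mod_cast this
      exact ⟨by linarith [h.1], by linarith [h.2]⟩


theorem stmt12 (d r i : ℕ) (hd : 1 ≤ d) (hr : 1 ≤ r) (hi1 : 1 ≤ i) (hid : i ≤ d) :
    (rdil d r i =
      ⋃ j ∈ Finset.Icc 1 d, ⋃ v ∈ Comp (r - 1) (d + 1) ((i : ℤ) * r - j),
        latTranslate d v j) ∧
    (∀ (j1 j2 : ℕ) (u v : Fin (d + 1) → ℤ), 1 ≤ j1 → j1 ≤ d → 1 ≤ j2 → j2 ≤ d →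
      u ∈ Comp (r - 1) (d + 1) ((i : ℤ) * r - j1) →
      v ∈ Comp (r - 1) (d + 1) ((i : ℤ) * r - j2) →
      IsFace (latTranslate d u j1) (latTranslate d u j1 ∩ latTranslate d v j2) ∧
      IsFace (latTranslate d v j2) (latTranslate d u j1 ∩ latTranslate d v j2)) := by
  
    constructor
    · exact union_eq d r i hd hr hi1 hid
    · intro j1 j2 u v hj11 hj1d hj21 hj2d hu hv
      obtain ⟨-, hu2⟩ := hu
      obtain ⟨-, hv2⟩ := hv
      have hsum : (∑ t, (u t : ℝ)) + j1 = (∑ t, (v t : ℝ)) + j2 := by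
        have h1 := congrArg (fun z : ℤ => (z : ℝ)) hu2
        have h2 := congrArg (fun z : ℤ => (z : ℝ)) hv2
        push_cast at h1 h2
        linarith
      exact ⟨face_aux j1 j2 u v hsum, by rw [Set.inter_comm]; exact face_aux j2 j1 v u hsum.symm⟩
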